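/- For every fixed angle θ ∈ (0, π/2), the auxiliary function f̄(d) = ξ_L·(d − L·cos θ) + (180·b·L·sin θ/π)·(1 − p_b(d, θ)) is strictly decreasing in d on the closed interval [L·cos θ, L/cos θ]. -/

import Mathlib

/-- Distance from the UAV (at polar coordinates `(d, θ)` relative to Willie) to Bob. -/
noncomputable def db (L d θ : ℝ) : ℝ :=
  Real.sqrt (L ^ 2 + d ^ 2 - 2 * d * L * Real.cos θ)

/-- Elevation angle from Bob to the UAV (in radians). -/
noncomputable def θb (L d θ : ℝ) : ℝ :=
  Real.arcsin (d * Real.sin θ / db L d θ)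

/-- Probability of a LoS component in the UAV-to-Bob channel. -/
noncomputable def pb (a b L d θ : ℝ) : ℝ :=
  1 / (1 + a * Real.exp (-b * ((180 / Real.pi) * θb L d θ - a)))

/-- The objective `f(d, θ) = d_b^{ξ_L} · p_b`. -/
noncomputable def f (a b L ξL d θ : ℝ) : ℝ :=
  db L d θ ^ ξL * pb a b L d θ

/-! The linear term `ξ_L·(d − L cos θ)` is strictly decreasing, so it suffices that `p_b` is
nondecreasing in `d`. Since `t ↦ 1/(1 + a·exp(−b(t − a)))` is increasing, this reduces to the
elevation angle `θ_b`, i.e. to `d ↦ d / d_b(d)`; comparing squares, `x ≤ y` gives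
`y² d_b(x)² − x² d_b(y)² = L (y − x) (L (x + y) − 2 x y cos θ)`, which is nonnegative as long as
`d cos θ ≤ L`, the upper end of the interval. -/

open Real Set

section

variable {L θ : ℝ}

lemma radicand_db_pos (hL : L ≠ 0) (hs : sin θ ≠ 0) (d : ℝ) :
    0 < L ^ 2 + d ^ 2 - 2 * d * L * cos θ := by
  have hLs : 0 < (L * sin θ) ^ 2 := by have := mul_ne_zero hL hs; positivity
  nlinarith [sq_nonneg (d - L * cos θ), sin_sq_add_cos_sq θ]

lemma db_pos (hL : L ≠ 0) (hs : sin θ ≠ 0) (d : ℝ) : 0 < db L d θ :=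
  sqrt_pos.2 (radicand_db_pos hL hs d)

lemma db_sq (hL : L ≠ 0) (hs : sin θ ≠ 0) (d : ℝ) :
    db L d θ ^ 2 = L ^ 2 + d ^ 2 - 2 * d * L * cos θ :=
  sq_sqrt (radicand_db_pos hL hs d).le

lemma div_db_le_div_db (hL : 0 < L) (hs : sin θ ≠ 0) {x y : ℝ} (hx : 0 ≤ x) (hxy : x ≤ y)
    (hyL : y * cos θ ≤ L) : x / db L x θ ≤ y / db L y θ := by
  have hdx := db_pos hL.ne' hs x
  have hdy := db_pos hL.ne' hs y
  rw [div_le_div_iff₀ hdx hdy]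
  have hxyc : 2 * (x * y * cos θ) ≤ L * (x + y) := by
    rcases le_total (cos θ) 0 with hc | hc
    · nlinarith [mul_nonneg hx (hx.trans hxy)]
    · nlinarith [mul_le_mul_of_nonneg_left hyL hx, mul_le_mul_of_nonneg_right hxy hc]
  have hsq : (x * db L y θ) ^ 2 ≤ (y * db L x θ) ^ 2 := by
    rw [mul_pow, mul_pow, db_sq hL.ne' hs, db_sq hL.ne' hs]
    nlinarith [mul_nonneg (mul_nonneg (sub_nonneg.2 hxy) hL.le) (sub_nonneg.2 hxyc)]
  exact le_of_sq_le_sq hsq (mul_nonneg (hx.trans hxy) hdx.le)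

lemma monotoneOn_θb (hL : 0 < L) (hs : 0 < sin θ) (hc : 0 < cos θ) :
    MonotoneOn (fun d => θb L d θ) (Icc 0 (L / cos θ)) := by
  intro x hx y hy hxy
  have hyL : y * cos θ ≤ L := (le_div_iff₀ hc).1 hy.2
  have hratio := div_db_le_div_db hL hs.ne' hx.1 hxy hyL
  simp only [θb, mul_comm _ (sin θ), mul_div_assoc]
  exact arcsin_le_arcsin (mul_le_mul_of_nonneg_left hratio hs.le)

lemma monotoneOn_pb {a b : ℝ} (ha : 0 ≤ a) (hb : 0 ≤ b) (hL : 0 < L) (hs : 0 < sin θ)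
    (hc : 0 < cos θ) : MonotoneOn (fun d => pb a b L d θ) (Icc 0 (L / cos θ)) := by
  intro x hx y hy hxy
  have hθb := monotoneOn_θb hL hs hc hx hy hxy
  have hexp : exp (-b * (180 / π * θb L y θ - a)) ≤ exp (-b * (180 / π * θb L x θ - a)) :=
    exp_le_exp.2 <| mul_le_mul_of_nonpos_left (by gcongr) (neg_nonpos.2 hb)
  simp only [pb]
  gcongr

end

/-- For fixed `θ ∈ (0, π/2)`, the auxiliary function
`f̄(d) = ξ_L·(d − L·cos θ) + (180·b·L·sin θ/π)·(1 − p_b(d, θ))`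
is strictly decreasing on `[L·cos θ, L/cos θ]`. -/
theorem stmt_2 (a b L ξL θ : ℝ) (ha : 0 < a) (hb : 0 < b) (hL : 0 < L)
    (hξ : ξL < 0) (hθ : θ ∈ Set.Ioo 0 (Real.pi / 2)) :
    StrictAntiOn
      (fun d => ξL * (d - L * Real.cos θ) +
        (180 * b * L * Real.sin θ / Real.pi) * (1 - pb a b L d θ))
      (Set.Icc (L * Real.cos θ) (L / Real.cos θ)) := by
  obtain ⟨hθ0, hθ2⟩ := hθ
  have hs : 0 < sin θ := sin_pos_of_pos_of_lt_pi hθ0 (by linarith [pi_pos])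
  have hc : 0 < cos θ := cos_pos_of_mem_Ioo ⟨by linarith [pi_pos], hθ2⟩
  have hsub : Icc (L * cos θ) (L / cos θ) ⊆ Icc 0 (L / cos θ) :=
    Icc_subset_Icc_left (by positivity)
  have hpb := (monotoneOn_pb ha.le hb.le hL hs hc).mono hsub
  have hlinear : StrictAntiOn (fun d => ξL * (d - L * cos θ)) (Icc (L * cos θ) (L / cos θ)) :=
    fun x _ y _ hxy => mul_lt_mul_of_neg_left (sub_lt_sub_right hxy _) hξ
  refine hlinear.add_antitone fun x hx y hy hxy => ?_
  have hC : 0 ≤ 180 * b * L * sin θ / π := by positivity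
  exact mul_le_mul_of_nonneg_left (sub_le_sub_left (hpb hx hy hxy) 1) hC
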